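/- arXiv:2411.11099 — 2 statements merged into one kernel-verified Lean document; each statement's English description precedes it below -/
import Mathlib

section
/- For M i.i.d. samples s'_1,...,s'_M from the uniform distribution on [-u,u] and a fixed point c ∈ [-u,u], the expected minimum distance equals (u/(M+1))·(1 + (|c|/u)^{M+1}). -/
open MeasureTheory ProbabilityTheory Set

/-!
Layer cake: `E[min_k |c - s'_k|] = ∫_0^∞ P(min_k |c - s'_k| > t) dt`, and by independence the
integrand is `p(t)^M` with `p(t) = P(|c - s| > t)` for a single uniform `s`. The function `p` is
piecewise linear: `(u - t)/u` on `[0, u - |c|]`, `(u + |c| - t)/(2u)` on `[u - |c|, u + |c|]` and `0`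
beyond, so the two pieces integrate to `(u^(M+1) - |c|^(M+1)) / ((M+1) u^M)` and
`2 |c|^(M+1) / ((M+1) u^M)`.
-/

theorem lt_ciInf_iff_of_finite {α ι : Type*} [ConditionallyCompleteLinearOrder α] [Finite ι]
    [Nonempty ι] {f : ι → α} {a : α} : a < ⨅ i, f i ↔ ∀ i, a < f i := by
  refine ⟨fun h i => h.trans_le (ciInf_le (finite_range f).bddBelow i), fun h => ?_⟩
  obtain ⟨i, hi⟩ := exists_eq_ciInf_of_finite (f := f)
  exact hi ▸ h i

theorem integral_sub_div_pow (b d x y : ℝ) (M : ℕ) :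
    ∫ t in x..y, ((b - t) / d) ^ M
      = ((b - x) ^ (M + 1) - (b - y) ^ (M + 1)) / ((M + 1) * d ^ M) := by
  simp_rw [div_pow, intervalIntegral.integral_div,
    intervalIntegral.integral_comp_sub_left (fun t => t ^ M), integral_pow, div_div]

/-- `P(|a - s| > t)` for `s` uniform on `[-u, u]`, when `|a| ≤ u` and `0 ≤ t`. -/
noncomputable def uniformDistTail (u a t : ℝ) : ℝ :=
  (max (u + a - t) 0 + max (u - a - t) 0) / (2 * u)

section UniformDistTail

variable {u a t : ℝ}

theorem uniformDistTail_abs : uniformDistTail u |a| t = uniformDistTail u a t := by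
  unfold uniformDistTail
  rcases abs_cases a with ⟨h, _⟩ | ⟨h, _⟩ <;> rw [h]
  ring_nf

theorem uniformDistTail_nonneg (hu : 0 ≤ u) : 0 ≤ uniformDistTail u a t := by
  unfold uniformDistTail; positivity

theorem continuous_uniformDistTail : Continuous (uniformDistTail u a) := by
  unfold uniformDistTail; fun_prop

theorem uniformDistTail_of_le_sub (ha : 0 ≤ a) (ht : t ≤ u - a) :
    uniformDistTail u a t = (u - t) / u := by
  rw [uniformDistTail, max_eq_left (by linarith), max_eq_left (by linarith),
    show u + a - t + (u - a - t) = 2 * (u - t) by ring, mul_div_mul_left _ _ two_ne_zero]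

theorem uniformDistTail_of_sub_le (ht₁ : u - a ≤ t) (ht₂ : t ≤ u + a) :
    uniformDistTail u a t = (u + a - t) / (2 * u) := by
  rw [uniformDistTail, max_eq_left (by linarith), max_eq_right (by linarith), add_zero]

theorem uniformDistTail_of_add_le (ha : 0 ≤ a) (ht : u + a ≤ t) :
    uniformDistTail u a t = 0 := by
  rw [uniformDistTail, max_eq_right (by linarith), max_eq_right (by linarith), add_zero,
    zero_div]

theorem integral_uniformDistTail_pow (hu : 0 < u) (ha : 0 ≤ a) (hau : a ≤ u) {M : ℕ}
    (hM : M ≠ 0) :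
    ∫ t in Ioi 0, uniformDistTail u a t ^ M = u / (M + 1) * (1 + (a / u) ^ (M + 1)) := by
  have hint : ∀ x y, IntervalIntegrable (fun t => uniformDistTail u a t ^ M) volume x y :=
    fun x y => (continuous_uniformDistTail.pow M).intervalIntegrable x y
  have hnear : ∫ t in 0..(u - a), uniformDistTail u a t ^ M
      = ∫ t in 0..(u - a), ((u - t) / u) ^ M :=
    intervalIntegral.integral_congr fun t ht => by
      rw [uIcc_of_le (by linarith)] at ht
      rw [uniformDistTail_of_le_sub ha ht.2]
  have hfar : ∫ t in (u - a)..(u + a), uniformDistTail u a t ^ M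
      = ∫ t in (u - a)..(u + a), ((u + a - t) / (2 * u)) ^ M :=
    intervalIntegral.integral_congr fun t ht => by
      rw [uIcc_of_le (by linarith)] at ht
      rw [uniformDistTail_of_sub_le ht.1 ht.2]
  calc ∫ t in Ioi 0, uniformDistTail u a t ^ M
      = ∫ t in 0..(u + a), uniformDistTail u a t ^ M := by
        rw [intervalIntegral.integral_of_le (by linarith)]
        refine setIntegral_eq_of_subset_of_forall_sdiff_eq_zero measurableSet_Ioi
          Ioc_subset_Ioi_self fun t ht => ?_
        have : u + a ≤ t := by
          simp only [mem_sdiff, mem_Ioi, mem_Ioc, not_and, not_le] at ht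
          exact (ht.2 ht.1).le
        rw [uniformDistTail_of_add_le ha this, zero_pow hM]
    _ = u / (M + 1) * (1 + (a / u) ^ (M + 1)) := by
        rw [← intervalIntegral.integral_add_adjacent_intervals (hint _ _) (hint _ _), hnear, hfar,
          integral_sub_div_pow, integral_sub_div_pow, sub_zero, sub_sub_cancel, sub_self,
          zero_pow M.succ_ne_zero, show u + a - (u - a) = 2 * a by ring, mul_pow, mul_pow, div_pow]
        field_simp
        ring

theorem volume_lt_abs_sub_inter_Icc {c : ℝ} (hc : |c| ≤ u) (ht : 0 ≤ t) :
    volume ({x | t < |c - x|} ∩ Icc (-u) u)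
      = ENNReal.ofReal (max (u + c - t) 0 + max (u - c - t) 0) := by
  obtain ⟨hc₁, hc₂⟩ := abs_le.1 hc
  have hsplit : {x | t < |c - x|} ∩ Icc (-u) u = Ico (-u) (c - t) ∪ Ioc (c + t) u := by
    ext x
    simp only [mem_inter_iff, mem_ofPred_eq, mem_Icc, mem_union, mem_Ico, mem_Ioc, lt_abs]
    constructor
    · rintro ⟨h | h, hx₁, hx₂⟩
      exacts [Or.inl ⟨hx₁, by linarith⟩, Or.inr ⟨by linarith, hx₂⟩]
    · rintro (⟨hx₁, hx₂⟩ | ⟨hx₁, hx₂⟩)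
      exacts [⟨Or.inl (by linarith), hx₁, by linarith⟩, ⟨Or.inr (by linarith), by linarith, hx₂⟩]
  have hdisj : Disjoint (Ico (-u) (c - t)) (Ioc (c + t) u) :=
    Set.disjoint_left.2 fun x hx hx' => by linarith [hx.2, hx'.1]
  rw [hsplit, measure_union hdisj measurableSet_Ioc, Real.volume_Ico, Real.volume_Ioc,
    ENNReal.ofReal_add (le_max_right _ _) (le_max_right _ _)]
  simp only [ENNReal.ofReal_max, ENNReal.ofReal_zero, zero_le, max_eq_left]
  ring_nf

theorem measure_preimage_lt_abs_sub {Ω : Type*} [MeasurableSpace Ω] {P : Measure Ω}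
    {s : Ω → ℝ} (hs : Measurable s)
    (hunif : P.map s = (ENNReal.ofReal (2 * u))⁻¹ • volume.restrict (Icc (-u) u))
    (hu : 0 < u) {c : ℝ} (hc : |c| ≤ u) (ht : 0 ≤ t) :
    P (s ⁻¹' {x | t < |c - x|}) = ENNReal.ofReal (uniformDistTail u c t) := by
  have hS : MeasurableSet {x : ℝ | t < |c - x|} := measurableSet_lt (by fun_prop) (by fun_prop)
  rw [← Measure.map_apply hs hS, hunif, Measure.smul_apply, smul_eq_mul,
    Measure.restrict_apply hS, volume_lt_abs_sub_inter_Icc hc ht, uniformDistTail,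
    ENNReal.ofReal_div_of_pos (by linarith), ENNReal.div_eq_inv_mul]

theorem ae_mem_Icc_of_map_eq {Ω : Type*} [MeasurableSpace Ω] {P : Measure Ω}
    {s : Ω → ℝ} (hs : Measurable s)
    (hunif : P.map s = (ENNReal.ofReal (2 * u))⁻¹ • volume.restrict (Icc (-u) u)) :
    ∀ᵐ ω ∂P, s ω ∈ Icc (-u) u :=
  ae_of_ae_map hs.aemeasurable <|
    hunif ▸ Measure.ae_smul_measure (ae_restrict_mem measurableSet_Icc) _

end UniformDistTail

theorem ProbabilityTheory.iIndepFun.measure_lt_iInf {Ω ι : Type*} [MeasurableSpace Ω]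
    {P : Measure Ω} [Fintype ι] [Nonempty ι] {X : ι → Ω → ℝ} (hX : iIndepFun X P) {g : ℝ → ℝ}
    (hg : Measurable g) (t : ℝ) :
    P {ω | t < ⨅ i, g (X i ω)} = ∏ i, P (X i ⁻¹' {x | t < g x}) := by
  have hset : {ω | t < ⨅ i, g (X i ω)} = ⋂ i, X i ⁻¹' {x | t < g x} := by
    ext ω
    simp only [mem_ofPred_eq, mem_iInter, mem_preimage, lt_ciInf_iff_of_finite]
  rw [hset]
  exact hX.meas_iInter fun i => ⟨_, measurableSet_lt measurable_const hg, rfl⟩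

/-- Exact formula for the expected minimum distance of `M` i.i.d. uniform samples on
`[-u, u]` to a fixed point `c ∈ [-u, u]`:
`E[min_k |c - s'_k|] = (u/(M+1)) * (1 + (|c|/u)^(M+1))`. -/
theorem expected_min_dist_eq
    {Ω : Type*} [MeasurableSpace Ω] (P : Measure Ω) [IsProbabilityMeasure P]
    (u c : ℝ) (hu : 0 < u) (hc : |c| ≤ u)
    (M : ℕ) (hM : 0 < M)
    (s' : Fin M → Ω → ℝ)
    (hmeas : ∀ k, Measurable (s' k))
    (hunif : ∀ k, Measure.map (s' k) P
      = (ENNReal.ofReal (2 * u))⁻¹ • volume.restrict (Set.Icc (-u) u))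
    (hindep : iIndepFun s' P) :
    ∫ ω, (⨅ k : Fin M, |c - s' k ω|) ∂P
      = (u / (M + 1)) * (1 + (|c| / u) ^ (M + 1)) := by
  have : Nonempty (Fin M) := Fin.pos_iff_nonempty.mp hM
  let k₀ : Fin M := ⟨0, hM⟩
  set f : Ω → ℝ := fun ω => ⨅ k, |c - s' k ω|
  have hf_nonneg : ∀ ω, 0 ≤ f ω := fun ω => le_ciInf fun k => abs_nonneg _
  have hf_int : Integrable f P := by
    refine .of_bound (Measurable.iInf fun k => by fun_prop).aestronglyMeasurable (2 * u) ?_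
    filter_upwards [ae_mem_Icc_of_map_eq (hmeas k₀) (hunif k₀)] with ω hω
    rw [Real.norm_of_nonneg (hf_nonneg ω)]
    calc f ω ≤ |c - s' k₀ ω| := ciInf_le (finite_range _).bddBelow k₀
      _ ≤ 2 * u := abs_sub_le_iff.2 ⟨by linarith [le_abs_self c, hω.1],
          by linarith [neg_abs_le c, hω.2]⟩
  have htail : ∀ t ∈ Ioi (0 : ℝ), P.real {ω | t < f ω} = uniformDistTail u |c| t ^ M := by
    intro t ht
    rw [measureReal_def, hindep.measure_lt_iInf (g := fun x => |c - x|) (by fun_prop),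
      Finset.prod_congr rfl fun k _ => measure_preimage_lt_abs_sub (hmeas k) (hunif k) hu hc ht.le,
      Finset.prod_const, Finset.card_univ, Fintype.card_fin, ENNReal.toReal_pow,
      ENNReal.toReal_ofReal (uniformDistTail_nonneg hu.le), uniformDistTail_abs]
  rw [hf_int.integral_eq_integral_meas_lt (.of_forall hf_nonneg),
    setIntegral_congr_fun measurableSet_Ioi htail,
    integral_uniformDistTail_pow hu (abs_nonneg c) hc hM.ne']
end

section
/- Define q*(s, s') = R(s, s') + γ · max_{a'} Q*(s', a'). If R(s,·) is K_R-Lipschitz, Q* is K_Q-Lipschitz (jointly in state and action), and whenever ‖s'₁ − s'₂‖ ≤ ε the corresponding maximizers a*₁ = argmax_{a'} Q*(s'₁, a'), a*₂ = argmax_{a'} Q*(s'₂, a') satisfy ‖a*₁ − a*₂‖ ≤ L‖s'₁ − s'₂‖, then |q*(s, s'₁) − q*(s, s'₂)| ≤ (K_R + √(1 + L²)·K_Q)·ε for all s and all s'₁, s'₂ with ‖s'₁ − s'₂‖ ≤ ε. -/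
open EuclideanSpace NNReal

/-- Lemma (Appendix B): with `q*(s, s') = R(s, s') + γ max_{a'} Q*(s', a')`, if
`R(s,·)` is `K_R`-Lipschitz, `Q*` is `K_Q`-Lipschitz jointly, and the maximizer
selection `a*` is `L`-Lipschitz on pairs of states at distance at most `ε`, then
`|q*(s, s'₁) − q*(s, s'₂)| ≤ (K_R + √(1 + L²) K_Q) ε` whenever `‖s'₁ − s'₂‖ ≤ ε`. -/
theorem qstar_lipschitz_bound
    {n m : ℕ}
    (R : EuclideanSpace ℝ (Fin n) → EuclideanSpace ℝ (Fin n) → ℝ)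
    (Qstar : EuclideanSpace ℝ (Fin n) × EuclideanSpace ℝ (Fin m) → ℝ)
    (γ : ℝ) (hγ0 : 0 ≤ γ) (hγ1 : γ < 1)
    (K_R K_Q L ε : ℝ≥0)
    (hR : ∀ s, LipschitzWith K_R (R s))
    (hQ : LipschitzWith K_Q Qstar)
    (astar : EuclideanSpace ℝ (Fin n) → EuclideanSpace ℝ (Fin m))
    (hmax : ∀ s' a', Qstar (s', a') ≤ Qstar (s', astar s'))
    (haL : ∀ s'₁ s'₂ : EuclideanSpace ℝ (Fin n), ‖s'₁ - s'₂‖ ≤ ε →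
      ‖astar s'₁ - astar s'₂‖ ≤ L * ‖s'₁ - s'₂‖)
    (qstar : EuclideanSpace ℝ (Fin n) → EuclideanSpace ℝ (Fin n) → ℝ)
    (hq : ∀ s s', qstar s s' = R s s' + γ * Qstar (s', astar s')) :
    ∀ s s'₁ s'₂, ‖s'₁ - s'₂‖ ≤ ε →
      |qstar s s'₁ - qstar s s'₂|
        ≤ (K_R + Real.sqrt (1 + (L : ℝ) ^ 2) * K_Q) * ε := by
  intro s s'₁ s'₂ hss
  have hV : ∀ x y : EuclideanSpace ℝ (Fin n), ‖x - y‖ ≤ ε →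
      Qstar (x, astar x) - Qstar (y, astar y) ≤ K_Q * ε := by
    intro x y hxy
    have h1 : Qstar (y, astar x) ≤ Qstar (y, astar y) := hmax y (astar x)
    have h2 : dist (Qstar (x, astar x)) (Qstar (y, astar x))
        ≤ K_Q * dist (x, astar x) (y, astar x) := hQ.dist_le_mul _ _
    have h3 : dist ((x, astar x) : _ × EuclideanSpace ℝ (Fin m)) (y, astar x) = ‖x - y‖ := by
      rw [Prod.dist_eq, dist_self, dist_eq_norm]
      exact max_eq_left (norm_nonneg _)
    rw [h3, Real.dist_eq] at h2
    have h4 : Qstar (x, astar x) - Qstar (y, astar x) ≤ K_Q * ε := by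
      calc Qstar (x, astar x) - Qstar (y, astar x) ≤ |Qstar (x, astar x) - Qstar (y, astar x)| :=
            le_abs_self _
        _ ≤ K_Q * ‖x - y‖ := h2
        _ ≤ K_Q * ε := by exact mul_le_mul_of_nonneg_left hxy K_Q.coe_nonneg
    linarith
  have hss' : ‖s'₂ - s'₁‖ ≤ ε := by rwa [norm_sub_rev]
  have hV1 := hV s'₁ s'₂ hss
  have hV2 := hV s'₂ s'₁ hss'
  have hRd : |R s s'₁ - R s s'₂| ≤ K_R * ε := by
    have := (hR s).dist_le_mul s'₁ s'₂
    rw [Real.dist_eq, dist_eq_norm] at this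
    calc |R s s'₁ - R s s'₂| ≤ K_R * ‖s'₁ - s'₂‖ := this
      _ ≤ K_R * ε := mul_le_mul_of_nonneg_left hss K_R.coe_nonneg
  have hsq : (1 : ℝ) ≤ Real.sqrt (1 + (L : ℝ) ^ 2) := by
    have h1 : Real.sqrt 1 ≤ Real.sqrt (1 + (L : ℝ) ^ 2) :=
      Real.sqrt_le_sqrt (by nlinarith [sq_nonneg (L:ℝ)])
    simpa using h1
  have habs : |qstar s s'₁ - qstar s s'₂| ≤ K_R * ε + γ * (K_Q * ε) := by
    rw [hq, hq]
    have hg1 : γ * (Qstar (s'₁, astar s'₁) - Qstar (s'₂, astar s'₂)) ≤ γ * (K_Q * ε) :=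
      mul_le_mul_of_nonneg_left hV1 hγ0
    have hg2 : γ * (Qstar (s'₂, astar s'₂) - Qstar (s'₁, astar s'₁)) ≤ γ * (K_Q * ε) :=
      mul_le_mul_of_nonneg_left hV2 hγ0
    rw [abs_le] at hRd ⊢
    constructor <;> nlinarith [hRd.1, hRd.2]
  have hKQ : 0 ≤ (K_Q : ℝ) * ε := by positivity
  calc |qstar s s'₁ - qstar s s'₂| ≤ K_R * ε + γ * (K_Q * ε) := habs
    _ ≤ K_R * ε + Real.sqrt (1 + (L : ℝ) ^ 2) * (K_Q * ε) := by
        nlinarith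
    _ = (K_R + Real.sqrt (1 + (L : ℝ) ^ 2) * K_Q) * ε := by ring
end
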